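/- Let p ≥ 2. For every f ∈ L^p(X,μ), sup{Ω(f,f) : Ω ∈ S(L^p(X,μ))} = ‖f‖_p². (Equivalently, the norm ‖f‖_α defined by ‖f‖_α² = sup{Ω(f,f) : Ω ∈ S(L^p(X,μ))} coincides with ‖f‖_p.) -/

import Mathlib

/-! The bound `Ω(f,f) ≤ ‖f‖_p²` is condition (iii). It is attained by
`Ω(g,h) = ‖f‖_p^{2-p} ∫ g h̄ |f|^{p-2} dμ`: as an integral against a nonnegative weight this form is
positive and invariant, Hölder's inequality with exponents `p, p, p/(p-2)` bounds it by
`‖g‖_p ‖h‖_p`, and `Ω(f,f) = ‖f‖_p^{2-p} ‖f‖_p^p = ‖f‖_p²`. -/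

open MeasureTheory ENNReal Complex
open scoped ComplexOrder

/-- The set `S(L^p)` of sesquilinear forms on `L^p(X,μ)`: `Ω` is linear in the
first variable, conjugate-linear in the second, positive (`Ω(f,f) ≥ 0`),
invariant (`Ω(f·φ, ψ) = Ω(φ, f̄·ψ)` for continuous `φ, ψ`), and bounded
(`|Ω(f,g)| ≤ ‖f‖_p ‖g‖_p`). -/
def IsSform {X : Type*} [MeasurableSpace X] [TopologicalSpace X]
    (μ : Measure X) (p : ℝ≥0∞)
    (Ω : Lp ℂ p μ → Lp ℂ p μ → ℂ) : Prop :=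
  (∀ f g h : Lp ℂ p μ, Ω (f + g) h = Ω f h + Ω g h) ∧
  (∀ (c : ℂ) (f g : Lp ℂ p μ), Ω (c • f) g = c * Ω f g) ∧
  (∀ f g h : Lp ℂ p μ, Ω f (g + h) = Ω f g + Ω f h) ∧
  (∀ (c : ℂ) (f g : Lp ℂ p μ), Ω f (c • g) = (starRingEnd ℂ) c * Ω f g) ∧
  (∀ f : Lp ℂ p μ, 0 ≤ Ω f f) ∧
  (∀ (f : Lp ℂ p μ) (φ ψ : C(X, ℂ)) (φL ψL fφ fstarψ : Lp ℂ p μ),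
      (φL : X → ℂ) =ᵐ[μ] φ → (ψL : X → ℂ) =ᵐ[μ] ψ →
      (fφ : X → ℂ) =ᵐ[μ] (fun x => f x * φ x) →
      (fstarψ : X → ℂ) =ᵐ[μ] (fun x => (starRingEnd ℂ) (f x) * ψ x) →
      Ω fφ ψL = Ω φL fstarψ) ∧
  (∀ f g : Lp ℂ p μ, ‖Ω f g‖ ≤ ‖f‖ * ‖g‖)

/-- The set `B^p_+`: nonnegative functions in `L^{p/(p-2)}` of norm at most one
(in `ℝ≥0∞`-arithmetic `p/(p-2) = ∞` when `p = 2`). -/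
def MemBp {X : Type*} [MeasurableSpace X] (μ : Measure X) (p : ℝ≥0∞)
    (ψ : X → ℝ) : Prop :=
  MemLp ψ (p / (p - 2)) μ ∧ (0 ≤ᵐ[μ] ψ) ∧ eLpNorm ψ (p / (p - 2)) μ ≤ 1

open ComplexConjugate

theorem lintegral_mul_mul_rpow_le {α : Type*} [MeasurableSpace α] {μ : Measure α}
    {u v w : α → ℝ≥0∞} (hu : AEMeasurable u μ) (hv : AEMeasurable v μ) (hw : AEMeasurable w μ)
    {a b c : ℝ} (ha : 0 ≤ a) (hb : 0 ≤ b) (hc : 0 ≤ c) (habc : a + b + c = 1) :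
    ∫⁻ x, u x ^ a * v x ^ b * w x ^ c ∂μ ≤
      (∫⁻ x, u x ∂μ) ^ a * (∫⁻ x, v x ∂μ) ^ b * (∫⁻ x, w x ∂μ) ^ c := by
  simpa [Fin.prod_univ_three, mul_assoc] using lintegral_prod_norm_pow_le (μ := μ) Finset.univ
    (f := ![u, v, w]) (p := ![a, b, c]) (by simp [Fin.forall_fin_succ, hu, hv, hw])
    (by simp [Fin.sum_univ_three, habc]) (by simp [Fin.forall_fin_succ, ha, hb, hc])

theorem lintegral_enorm_mul_enorm_mul_enorm_rpow_le {α E F G : Type*} [MeasurableSpace α]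
    {μ : Measure α} [NormedAddCommGroup E] [NormedAddCommGroup F] [NormedAddCommGroup G]
    {p : ℝ≥0∞} (hp : 2 ≤ p) (hp' : p ≠ ∞) {g : α → E} {h : α → F} {f : α → G}
    (hg : AEStronglyMeasurable g μ) (hh : AEStronglyMeasurable h μ)
    (hf : AEStronglyMeasurable f μ) :
    ∫⁻ x, ‖g x‖ₑ * ‖h x‖ₑ * ‖f x‖ₑ ^ (p.toReal - 2) ∂μ ≤
      eLpNorm g p μ * eLpNorm h p μ * eLpNorm f p μ ^ (p.toReal - 2) := by
  set P := p.toReal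
  have hP : 2 ≤ P := by simpa using ENNReal.toReal_mono hp' hp
  have hp0 : p ≠ 0 := by rintro rfl; simp at hp
  have key := lintegral_mul_mul_rpow_le (hg.enorm.pow_const P) (hh.enorm.pow_const P)
    (hf.enorm.pow_const P) (a := 1 / P) (b := 1 / P) (c := (P - 2) / P) (by positivity)
    (by positivity) (div_nonneg (by linarith) (by linarith)) (by field_simp; ring)
  simp only [eLpNorm_eq_lintegral_rpow_enorm_toReal hp0 hp', ← ENNReal.rpow_mul] at key ⊢
  have hP0 : P ≠ 0 := by positivity
  convert key using 3 with x
  · rw [mul_one_div_cancel hP0, mul_div_cancel₀ _ hP0, ENNReal.rpow_one, ENNReal.rpow_one]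
  · ring

theorem Real.inv_rpow_sub_two_mul_rpow {x P : ℝ} (hx : 0 ≤ x) (hP : P ≠ 0) :
    (x ^ (P - 2))⁻¹ * x ^ P = x ^ 2 := by
  rcases hx.eq_or_lt with rfl | hx
  · simp [Real.zero_rpow hP]
  rw [Real.rpow_sub hx, Real.rpow_two]
  field_simp

theorem MeasureTheory.Lp.norm_rpow_eq_integral {α E : Type*} [MeasurableSpace α] {μ : Measure α}
    [NormedAddCommGroup E] {p : ℝ≥0∞} (hp0 : p ≠ 0) (hp : p ≠ ∞) (f : Lp E p μ) :
    ‖f‖ ^ p.toReal = ∫ x, ‖f x‖ ^ p.toReal ∂μ := by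
  rw [Lp.norm_def, (Lp.memLp f).eLpNorm_eq_integral_rpow_norm hp0 hp, toReal_ofReal
    (by positivity), Real.rpow_inv_rpow (integral_nonneg fun _ => by positivity)
    (toReal_ne_zero.2 ⟨hp0, hp⟩)]

section WeightedForm

variable {X : Type*} [MeasurableSpace X] {μ : Measure X} {p : ℝ≥0∞}

noncomputable def weightedForm (f g h : Lp ℂ p μ) : ℂ :=
  ∫ x, g x * conj (h x) * (‖f x‖ ^ (p.toReal - 2) : ℝ) ∂μ

theorem lintegral_enorm_weightedForm_integrand_le (hp : 2 ≤ p) (hp' : p ≠ ∞) (f g h : Lp ℂ p μ) :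
    ∫⁻ x, ‖g x * conj (h x) * (‖f x‖ ^ (p.toReal - 2) : ℝ)‖ₑ ∂μ ≤
      ENNReal.ofReal (‖g‖ * ‖h‖ * ‖f‖ ^ (p.toReal - 2)) := by
  have hP : 0 ≤ p.toReal - 2 := by
    have : 2 ≤ p.toReal := by simpa using ENNReal.toReal_mono hp' hp
    linarith
  calc _ = ∫⁻ x, ‖g x‖ₑ * ‖h x‖ₑ * ‖f x‖ₑ ^ (p.toReal - 2) ∂μ := by
        refine lintegral_congr fun x => ?_
        rw [enorm_mul, enorm_mul, RCLike.enorm_conj]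
        congr 1
        rw [← ofReal_norm, Complex.norm_real, Real.norm_of_nonneg (by positivity),
          ← ofReal_rpow_of_nonneg (norm_nonneg _) hP, ofReal_norm]
    _ ≤ eLpNorm g p μ * eLpNorm h p μ * eLpNorm f p μ ^ (p.toReal - 2) :=
        lintegral_enorm_mul_enorm_mul_enorm_rpow_le hp hp' (Lp.aestronglyMeasurable g)
          (Lp.aestronglyMeasurable h) (Lp.aestronglyMeasurable f)
    _ = ENNReal.ofReal (‖g‖ * ‖h‖ * ‖f‖ ^ (p.toReal - 2)) := by
        rw [Lp.norm_def, Lp.norm_def, Lp.norm_def, toReal_rpow, ← toReal_mul, ← toReal_mul,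
          ofReal_toReal (mul_ne_top (mul_ne_top (Lp.eLpNorm_ne_top g) (Lp.eLpNorm_ne_top h))
            (rpow_ne_top_of_nonneg hP (Lp.eLpNorm_ne_top f)))]

theorem integrable_weightedForm_integrand (hp : 2 ≤ p) (hp' : p ≠ ∞) (f g h : Lp ℂ p μ) :
    Integrable (fun x => g x * conj (h x) * (‖f x‖ ^ (p.toReal - 2) : ℝ)) μ :=
  ⟨((Lp.aestronglyMeasurable g).mul
      (continuous_conj.comp_aestronglyMeasurable (Lp.aestronglyMeasurable h))).mul
      (continuous_ofReal.comp_aestronglyMeasurable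
        ((Lp.aestronglyMeasurable f).norm.aemeasurable.pow_const _).aestronglyMeasurable),
    (lintegral_enorm_weightedForm_integrand_le hp hp' f g h).trans_lt ofReal_lt_top⟩

theorem norm_weightedForm_le (hp : 2 ≤ p) (hp' : p ≠ ∞) (f g h : Lp ℂ p μ) :
    ‖weightedForm f g h‖ ≤ ‖g‖ * ‖h‖ * ‖f‖ ^ (p.toReal - 2) :=
  toReal_le_of_le_ofReal
    (mul_nonneg (mul_nonneg toReal_nonneg toReal_nonneg) (Real.rpow_nonneg toReal_nonneg _))
    ((enorm_integral_le_lintegral_enorm _).trans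
      (lintegral_enorm_weightedForm_integrand_le hp hp' f g h))

theorem weightedForm_add_left (hp : 2 ≤ p) (hp' : p ≠ ∞) (f g g' h : Lp ℂ p μ) :
    weightedForm f (g + g') h = weightedForm f g h + weightedForm f g' h := by
  rw [weightedForm, weightedForm, weightedForm, ← integral_add
    (integrable_weightedForm_integrand hp hp' f g h)
    (integrable_weightedForm_integrand hp hp' f g' h)]
  refine integral_congr_ae ?_
  filter_upwards [Lp.coeFn_add g g'] with x hx
  rw [hx, Pi.add_apply]
  ring

theorem weightedForm_add_right (hp : 2 ≤ p) (hp' : p ≠ ∞) (f g h h' : Lp ℂ p μ) :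
    weightedForm f g (h + h') = weightedForm f g h + weightedForm f g h' := by
  rw [weightedForm, weightedForm, weightedForm, ← integral_add
    (integrable_weightedForm_integrand hp hp' f g h)
    (integrable_weightedForm_integrand hp hp' f g h')]
  refine integral_congr_ae ?_
  filter_upwards [Lp.coeFn_add h h'] with x hx
  rw [hx, Pi.add_apply, map_add]
  ring

theorem weightedForm_smul_left (c : ℂ) (f g h : Lp ℂ p μ) :
    weightedForm f (c • g) h = c * weightedForm f g h := by
  rw [weightedForm, weightedForm, ← integral_const_mul]
  refine integral_congr_ae ?_
  filter_upwards [Lp.coeFn_smul c g] with x hx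
  rw [hx, Pi.smul_apply, smul_eq_mul]
  ring

theorem weightedForm_smul_right (c : ℂ) (f g h : Lp ℂ p μ) :
    weightedForm f g (c • h) = conj c * weightedForm f g h := by
  rw [weightedForm, weightedForm, ← integral_const_mul]
  refine integral_congr_ae ?_
  filter_upwards [Lp.coeFn_smul c h] with x hx
  rw [hx, Pi.smul_apply, smul_eq_mul, map_mul]
  ring

theorem weightedForm_self_right (f g : Lp ℂ p μ) :
    weightedForm f g g = ((∫ x, ‖g x‖ ^ 2 * ‖f x‖ ^ (p.toReal - 2) ∂μ : ℝ) : ℂ) := by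
  rw [weightedForm, ← integral_complex_ofReal]
  congr with x
  rw [mul_conj']
  push_cast
  rfl

theorem weightedForm_eq_of_ae_eq_mul {φ ψ : X → ℂ} {f u φL ψL uφ uψ : Lp ℂ p μ}
    (hφ : (φL : X → ℂ) =ᵐ[μ] φ) (hψ : (ψL : X → ℂ) =ᵐ[μ] ψ)
    (huφ : (uφ : X → ℂ) =ᵐ[μ] fun x => u x * φ x)
    (huψ : (uψ : X → ℂ) =ᵐ[μ] fun x => conj (u x) * ψ x) :
    weightedForm f uφ ψL = weightedForm f φL uψ := by
  refine integral_congr_ae ?_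
  filter_upwards [hφ, hψ, huφ, huψ] with x hφx hψx huφx huψx
  rw [hφx, hψx, huφx, huψx, map_mul, conj_conj]
  ring

/-- For `f = 0` the normalising factor is `0⁻¹ = 0` (or `1` when `p = 2`), which still gives an
element of `S(L^p)`. -/
noncomputable def normalizedWeightedForm (f g h : Lp ℂ p μ) : ℂ :=
  ((‖f‖ ^ (p.toReal - 2))⁻¹ : ℝ) * weightedForm f g h

theorem normalizedWeightedForm_self (hp : 2 ≤ p) (hp' : p ≠ ∞) (f : Lp ℂ p μ) :
    normalizedWeightedForm f f f = ((‖f‖ ^ 2 : ℝ) : ℂ) := by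
  have hp0 : p ≠ 0 := by rintro rfl; simp at hp
  have hP : p.toReal ≠ 0 := toReal_ne_zero.2 ⟨hp0, hp'⟩
  have hfx : ∀ x, ‖f x‖ ^ 2 * ‖f x‖ ^ (p.toReal - 2) = ‖f x‖ ^ p.toReal := fun x => by
    rw [← Real.rpow_two, ← Real.rpow_add' (norm_nonneg _) (by simpa using hP), add_sub_cancel]
  simp only [normalizedWeightedForm, weightedForm_self_right, hfx,
    ← Lp.norm_rpow_eq_integral hp0 hp', ← Complex.ofReal_mul,
    Real.inv_rpow_sub_two_mul_rpow (x := ‖f‖) toReal_nonneg hP]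

end WeightedForm

theorem isSform_normalizedWeightedForm {X : Type*} [MeasurableSpace X] [TopologicalSpace X]
    {μ : Measure X} {p : ℝ≥0∞} (hp : 2 ≤ p) (hp' : p ≠ ∞) (f : Lp ℂ p μ) :
    IsSform μ p (normalizedWeightedForm f) := by
  have hc : 0 ≤ (‖f‖ ^ (p.toReal - 2))⁻¹ := inv_nonneg.2 (Real.rpow_nonneg toReal_nonneg _)
  refine ⟨fun g g' h => ?_, fun c g h => ?_, fun g h h' => ?_, fun c g h => ?_, fun g => ?_,
    fun u φ ψ φL ψL uφ uψ hφ hψ huφ huψ => ?_, fun g h => ?_⟩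
  · rw [normalizedWeightedForm, weightedForm_add_left hp hp', mul_add]; rfl
  · rw [normalizedWeightedForm, weightedForm_smul_left, mul_left_comm]; rfl
  · rw [normalizedWeightedForm, weightedForm_add_right hp hp', mul_add]; rfl
  · rw [normalizedWeightedForm, weightedForm_smul_right, mul_left_comm]; rfl
  · rw [normalizedWeightedForm, weightedForm_self_right, ← Complex.ofReal_mul, zero_le_real]
    exact mul_nonneg hc (integral_nonneg fun x => by positivity)
  · rw [normalizedWeightedForm, normalizedWeightedForm, weightedForm_eq_of_ae_eq_mul hφ hψ huφ huψ]
  · calc ‖normalizedWeightedForm f g h‖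
        = (‖f‖ ^ (p.toReal - 2))⁻¹ * ‖weightedForm f g h‖ := by
          rw [normalizedWeightedForm, norm_mul, norm_real, Real.norm_of_nonneg hc]
      _ ≤ (‖f‖ ^ (p.toReal - 2))⁻¹ * (‖g‖ * ‖h‖ * ‖f‖ ^ (p.toReal - 2)) := by
          gcongr; exact norm_weightedForm_le hp hp' f g h
      _ = ‖g‖ * ‖h‖ * ((‖f‖ ^ (p.toReal - 2))⁻¹ * ‖f‖ ^ (p.toReal - 2)) := by ring
      _ ≤ ‖g‖ * ‖h‖ :=
          mul_le_of_le_one_right (mul_nonneg toReal_nonneg toReal_nonneg) inv_mul_le_one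

theorem IsSform.norm_apply_self_le {X : Type*} [MeasurableSpace X] [TopologicalSpace X]
    {μ : Measure X} {p : ℝ≥0∞} {Ω : Lp ℂ p μ → Lp ℂ p μ → ℂ} (hΩ : IsSform μ p Ω)
    (f : Lp ℂ p μ) : ‖Ω f f‖ ≤ ‖f‖ ^ 2 :=
  (hΩ.2.2.2.2.2.2 f f).trans_eq (sq _).symm

theorem alpha_norm_eq_lp_norm_general
    {X : Type*} [MeasurableSpace X] [TopologicalSpace X]
    (μ : Measure X)
    (p : ℝ≥0∞) (hp : 2 ≤ p) (hp' : p ≠ ∞) (f : Lp ℂ p μ) :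
    sSup {r : ℝ | ∃ Ω : Lp ℂ p μ → Lp ℂ p μ → ℂ,
        IsSform μ p Ω ∧ Ω f f = (r : ℂ)} = ‖f‖ ^ 2 := by
  refine IsGreatest.csSup_eq ⟨⟨normalizedWeightedForm f, isSform_normalizedWeightedForm hp hp' f,
    normalizedWeightedForm_self hp hp' f⟩, ?_⟩
  rintro r ⟨Ω, hΩ, hr⟩
  exact (le_abs_self r).trans (by simpa [hr] using hΩ.norm_apply_self_le f)

/-- For `p ≥ 2` and `f ∈ L^p(X,μ)`,
`sup {Ω(f,f) : Ω ∈ S(L^p(X,μ))} = ‖f‖_p²`, i.e. `‖f‖_α = ‖f‖_p`. -/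
theorem alpha_norm_eq_lp_norm
    {X : Type*} [MeasurableSpace X] [TopologicalSpace X] [CompactSpace X]
    [T2Space X] [BorelSpace X] (μ : Measure X) [IsFiniteMeasure μ]
    (p : ℝ≥0∞) (hp : 2 ≤ p) (hp' : p ≠ ∞) (f : Lp ℂ p μ) :
    sSup {r : ℝ | ∃ Ω : Lp ℂ p μ → Lp ℂ p μ → ℂ,
        IsSform μ p Ω ∧ Ω f f = (r : ℂ)} = ‖f‖ ^ 2 :=
  alpha_norm_eq_lp_norm_general μ p hp hp' f
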